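/- Let R ⊆ ℕ be sparse with enumeration (r_n), let A_1,...,A_m be operators, none identically zero on R, and let Δ be sufficiently large so that z ↦ Σ_i A_i(z_i) is injective and order-reflecting on R^m_Δ (as in the ordering lemma). Define, for x ∈ ℤ with x > inf over R^m_Δ of the sum, P_Δ(x) := the unique tuple z ∈ R^m_Δ maximizing Σ_i A_i(z_i) subject to Σ_i A_i(z_i) < x, and Q_Δ(x) := the unique z minimizing the sum subject to Σ_i A_i(z_i) ≥ x (when x ≤ sup). Then for all such x, the first coordinates satisfy Q_Δ(x)_1 ∈ {P_Δ(x)_1 − 1, P_Δ(x)_1, P_Δ(x)_1 + 1} (as indices into the enumeration of R). -/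
import Mathlib


open Filter

/-- `opApp a k r n = Σ_{i=0}^{k} a_i · r(n+i)`. -/
def opApp (a : ℕ → ℤ) (k : ℕ) (r : ℕ → ℕ) (n : ℕ) : ℤ :=
  ∑ i ∈ Finset.range (k + 1), a i * (r (n + i) : ℤ)

/-- Sparsity: trichotomy (S1) and condition (S2). -/
def IsSparse (r : ℕ → ℕ) : Prop :=
  ∀ (a : ℕ → ℤ) (k : ℕ),
    ((∀ n, opApp a k r n = 0) ∨ (∀ᶠ n in atTop, 0 < opApp a k r n) ∨
      (∀ᶠ n in atTop, opApp a k r n < 0)) ∧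
    ((∀ᶠ n in atTop, 0 < opApp a k r n) → ∃ Δ : ℕ, ∀ n, (r n : ℤ) < opApp a k r (n + Δ))

/-- The index tuple `z` lies in `R^m_Δ`: `z i ≥ z (i+1) + Δ`, where `z (m+1) := 0`. -/
def InCone (m : ℕ) (Δ : ℕ) (z : Fin m → ℕ) : Prop :=
  ∀ i : Fin m, (if h : (i : ℕ) + 1 < m then z ⟨(i : ℕ) + 1, h⟩ else 0) + Δ ≤ z i

lemma opApp_neg (a : ℕ → ℤ) (k : ℕ) (r : ℕ → ℕ) (n : ℕ) :
    opApp (fun i => -(a i)) k r n = -opApp a k r n := by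
  simp [opApp, Finset.sum_neg_distrib]

lemma opApp_abs_le (a : ℕ → ℤ) (k : ℕ) (r : ℕ → ℕ) (hmono : Monotone r) (n : ℕ) :
    |opApp a k r n| ≤ (∑ i ∈ Finset.range (k + 1), |a i|) * (r (n + k) : ℤ) := by
  calc |opApp a k r n| ≤ ∑ i ∈ Finset.range (k + 1), |a i * (r (n + i) : ℤ)| :=
        Finset.abs_sum_le_sum_abs _ _
    _ ≤ ∑ i ∈ Finset.range (k + 1), |a i| * (r (n + k) : ℤ) := by
        refine Finset.sum_le_sum fun i hi => ?_
        rw [abs_mul, abs_of_nonneg (by positivity : (0:ℤ) ≤ (r (n+i) : ℤ))]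
        have : r (n + i) ≤ r (n + k) := hmono (by
          have := Finset.mem_range.mp hi; omega)
        exact mul_le_mul_of_nonneg_left (by exact_mod_cast this) (abs_nonneg _)
    _ = _ := by rw [Finset.sum_mul]

lemma r_superlinear (r : ℕ → ℕ) (hmono : StrictMono r) (hsparse : IsSparse r) :
    ∃ Δ₂ : ℕ, ∀ n t : ℕ, t * r n ≤ r (n + Δ₂ + t) := by
  set a' : ℕ → ℤ := fun i => if i = 0 then -1 else 1 with ha'
  have hval : ∀ n, opApp a' 1 r n = (r (n+1) : ℤ) - r n := by
    intro n
    simp [opApp, Finset.sum_range_succ, ha']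
    ring
  have hev : ∀ᶠ n in atTop, 0 < opApp a' 1 r n := by
    refine Eventually.of_forall fun n => ?_
    rw [hval]
    have := hmono (show n < n+1 by omega)
    omega
  obtain ⟨Δ₂, hΔ₂⟩ := (hsparse a' 1).2 hev
  refine ⟨Δ₂, fun n t => ?_⟩
  induction t with
  | zero => simp
  | succ t ih =>
    have h1 := hΔ₂ (n + t)
    rw [hval] at h1
    have h2 : r n ≤ r (n + t) := hmono.monotone (by omega)
    have h3 : r (n + t + Δ₂) = r (n + Δ₂ + t) := by ring_nf
    have h4 : r (n + t + Δ₂ + 1) = r (n + Δ₂ + (t+1)) := by ring_nf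
    have h5 : (t+1) * r n = t * r n + r n := by ring
    omega

def bcoef (a : ℕ → ℤ) (K : ℕ) (i : ℕ) : ℤ :=
  (if i = 0 then 0 else a (i-1)) - (if i ≤ K then a i else 0)

lemma opApp_bcoef (a : ℕ → ℤ) (K : ℕ) (r : ℕ → ℕ) (n : ℕ) :
    opApp (bcoef a K) (K+1) r n = opApp a K r (n+1) - opApp a K r n := by
  unfold opApp bcoef
  simp_rw [sub_mul]
  rw [Finset.sum_sub_distrib]
  congr 1
  · rw [Finset.sum_range_succ']
    norm_num
    refine Finset.sum_congr rfl fun i _ => ?_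
    have h : n + (i + 1) = n + 1 + i := by omega
    rw [h]
  · rw [Finset.sum_range_succ]
    rw [if_neg (by omega : ¬ K + 1 ≤ K)]
    simp only [zero_mul, add_zero]
    refine Finset.sum_congr rfl fun i hi => ?_
    rw [if_pos (by have := Finset.mem_range.mp hi; omega)]

lemma bcoef_ev_pos (r : ℕ → ℕ) (hmono : StrictMono r) (hsparse : IsSparse r)
    (a : ℕ → ℤ) (K : ℕ) (hpos : ∀ᶠ n in atTop, 0 < opApp a K r n) :
    ∀ᶠ n in atTop, 0 < opApp (bcoef a K) (K+1) r n := by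
  rcases (hsparse (bcoef a K) (K+1)).1 with hz | hp | hn
  · -- A constant, contradiction with S2
    exfalso
    have hconst : ∀ n, opApp a K r n = opApp a K r 0 := by
      intro n
      induction n with
      | zero => rfl
      | succ n ih =>
        have := hz n
        rw [opApp_bcoef] at this
        omega
    obtain ⟨Δ₁, hΔ₁⟩ := (hsparse a K).2 hpos
    have h1 := hΔ₁ ((opApp a K r 0).toNat)
    rw [hconst ((opApp a K r 0).toNat + Δ₁)] at h1
    have h2 : ((opApp a K r 0).toNat : ℤ) ≤ r ((opApp a K r 0).toNat) := by
      exact_mod_cast hmono.le_apply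
    have h3 : opApp a K r 0 ≤ (opApp a K r 0).toNat := Int.self_le_toNat _
    omega
  · exact hp
  · exfalso
    rw [eventually_atTop] at hn hpos
    obtain ⟨N1, hN1⟩ := hn
    obtain ⟨N2, hN2⟩ := hpos
    set M := max N1 N2 with hM
    have hdec : ∀ t : ℕ, opApp a K r (M + t) ≤ opApp a K r M - t := by
      intro t
      induction t with
      | zero => simp
      | succ t ih =>
        have := hN1 (M + t) (by omega)
        rw [opApp_bcoef] at this
        have h4 : M + t + 1 = M + (t+1) := by omega
        rw [h4] at this
        push_cast
        omega
    have h5 := hdec (opApp a K r M).toNat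
    have h6 := hN2 (M + (opApp a K r M).toNat) (by omega)
    have h7 := hN2 M (by omega)
    have h8 : opApp a K r M ≤ (opApp a K r M).toNat := Int.self_le_toNat _
    omega

lemma incr_lemma (r : ℕ → ℕ) (hmono : StrictMono r) (hsparse : IsSparse r)
    (a : ℕ → ℤ) (K : ℕ) (hpos : ∀ᶠ n in atTop, 0 < opApp a K r n) :
    ∃ ΔB : ℕ, ∀ u t : ℕ, 0 < t →
      (r (u + t - 1) : ℤ) < opApp a K r (u + ΔB + t) - opApp a K r (u + ΔB) := by
  obtain ⟨ΔB, hΔB⟩ := (hsparse (bcoef a K) (K+1)).2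
    (bcoef_ev_pos r hmono hsparse a K hpos)
  refine ⟨ΔB, fun u t ht => ?_⟩
  induction t with
  | zero => omega
  | succ t ih =>
    rcases Nat.eq_zero_or_pos t with h0 | h0
    · subst h0
      have := hΔB u
      rw [opApp_bcoef] at this
      simpa using this
    · have h1 := ih h0
      have h2 := hΔB (u + t)
      rw [opApp_bcoef] at h2
      have h3 : u + t + ΔB + 1 = u + ΔB + (t + 1) := by omega
      have h4 : u + t + ΔB = u + ΔB + t := by omega
      rw [h3, h4] at h2
      have h5 : (0:ℤ) ≤ r (u + t - 1) := by positivity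
      have h6 : u + (t+1) - 1 = u + t := by omega
      rw [h6]
      omega

lemma cone_zero (m Δ : ℕ) (hm : 0 < m) (z : Fin m → ℕ) (hz : InCone m Δ z) :
    Δ ≤ z ⟨0, hm⟩ := by
  have := hz ⟨0, hm⟩
  split at this <;> omega

lemma cone_tail (m Δ : ℕ) (hm : 0 < m) (z : Fin m → ℕ) (hz : InCone m Δ z) :
    ∀ j (h : j < m), 0 < j → z ⟨j, h⟩ + Δ ≤ z ⟨0, hm⟩ := by
  intro j
  induction j with
  | zero => omega
  | succ j ih =>
    intro h _
    have hj : j < m := by omega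
    have h1 := hz ⟨j, hj⟩
    rw [dif_pos (show (j:ℕ) + 1 < m from h)] at h1
    have h1' : z ⟨j + 1, h⟩ + Δ ≤ z ⟨j, hj⟩ := h1
    rcases Nat.eq_zero_or_pos j with rfl | hj0
    · exact h1'
    · have h2 := ih hj hj0
      omega

lemma dom_lemma (r : ℕ → ℕ) (hmono : StrictMono r) (hsparse : IsSparse r)
    (m : ℕ) (hm : 0 < m) (a : Fin m → ℕ → ℤ) (K : Fin m → ℕ)
    (hpos : ∀ᶠ n in atTop, 0 < opApp (a ⟨0, hm⟩) (K ⟨0, hm⟩) r n) :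
    ∃ N : ℕ, ∀ Δ, N ≤ Δ → ∀ z w : Fin m → ℕ, InCone m Δ z → InCone m Δ w →
      w ⟨0, hm⟩ < z ⟨0, hm⟩ →
      ∑ i, opApp (a i) (K i) r (w i) < ∑ i, opApp (a i) (K i) r (z i) := by
  set i0 : Fin m := ⟨0, hm⟩ with hi0
  obtain ⟨ΔB, hΔB⟩ := incr_lemma r hmono hsparse (a i0) (K i0) hpos
  obtain ⟨Δ₂, hΔ₂⟩ := r_superlinear r hmono hsparse
  set Kmax := Finset.univ.sup K with hKmax
  set C : ℕ := ∑ i : Fin m, ∑ j ∈ Finset.range (K i + 1), (a i j).natAbs with hC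
  refine ⟨ΔB + Δ₂ + Kmax + 2 * C + 1, fun Δ hΔ z w hz hw hlt => ?_⟩
  have hz0 : Δ ≤ z i0 := cone_zero m Δ hm z hz
  have hw0 : Δ ≤ w i0 := cone_zero m Δ hm w hw
  set n' : ℕ := z i0 - Δ + Kmax with hn'
  -- tail bounds
  have htail : ∀ (v : Fin m → ℕ), InCone m Δ v → v i0 ≤ z i0 →
      |∑ i ∈ Finset.univ.erase i0, opApp (a i) (K i) r (v i)| ≤ (C : ℤ) * r n' := by
    intro v hv hvle
    calc |∑ i ∈ Finset.univ.erase i0, opApp (a i) (K i) r (v i)|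
        ≤ ∑ i ∈ Finset.univ.erase i0, |opApp (a i) (K i) r (v i)| :=
          Finset.abs_sum_le_sum_abs _ _
      _ ≤ ∑ i ∈ Finset.univ.erase i0,
            ((∑ j ∈ Finset.range (K i + 1), |a i j|) * (r n' : ℤ)) := by
          refine Finset.sum_le_sum fun i hi => ?_
          have hne : i ≠ i0 := Finset.ne_of_mem_erase hi
          have hipos : 0 < (i : ℕ) := by
            rcases Nat.eq_zero_or_pos (i : ℕ) with h0 | h0
            · exfalso; apply hne; apply Fin.ext; simpa using h0
            · exact h0
          have h1 : v i + Δ ≤ v i0 :=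
            cone_tail m Δ hm v hv i i.isLt hipos
          have h2 : v i + K i ≤ n' := by
            have h3 : K i ≤ Kmax := Finset.le_sup (Finset.mem_univ i)
            omega
          calc |opApp (a i) (K i) r (v i)|
              ≤ (∑ j ∈ Finset.range (K i + 1), |a i j|) * (r (v i + K i) : ℤ) :=
                opApp_abs_le (a i) (K i) r hmono.monotone (v i)
            _ ≤ (∑ j ∈ Finset.range (K i + 1), |a i j|) * (r n' : ℤ) := by
                apply mul_le_mul_of_nonneg_left
                · exact_mod_cast hmono.monotone h2
                · positivity
      _ ≤ ∑ i : Fin m, ((∑ j ∈ Finset.range (K i + 1), |a i j|) * (r n' : ℤ)) := by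
          apply Finset.sum_le_sum_of_subset_of_nonneg (Finset.erase_subset _ _)
          intro i _ _
          positivity
      _ = (C : ℤ) * r n' := by
          rw [← Finset.sum_mul]
          congr 1
          rw [hC]
          push_cast
          rfl
  -- main coordinate gap
  have hgap : 2 * (C : ℤ) * r n' <
      opApp (a i0) (K i0) r (z i0) - opApp (a i0) (K i0) r (w i0) := by
    have hu : ΔB ≤ w i0 := by omega
    have h1 := hΔB (w i0 - ΔB) (z i0 - w i0) (by omega)
    have e1 : w i0 - ΔB + ΔB + (z i0 - w i0) = z i0 := by omega
    have e2 : w i0 - ΔB + ΔB = w i0 := by omega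
    rw [e1, e2] at h1
    have h2 : n' + Δ₂ + 2 * C ≤ w i0 - ΔB + (z i0 - w i0) - 1 := by omega
    have h3 : 2 * C * r n' ≤ r (n' + Δ₂ + 2 * C) := hΔ₂ n' (2 * C)
    have h4 : r (n' + Δ₂ + 2 * C) ≤ r (w i0 - ΔB + (z i0 - w i0) - 1) :=
      hmono.monotone h2
    have h5 : (2 * C * r n' : ℕ) ≤ (r (w i0 - ΔB + (z i0 - w i0) - 1) : ℕ) := by omega
    calc 2 * (C : ℤ) * r n' = ((2 * C * r n' : ℕ) : ℤ) := by push_cast; ring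
      _ ≤ ((r (w i0 - ΔB + (z i0 - w i0) - 1) : ℕ) : ℤ) := by exact_mod_cast h5
      _ < _ := h1
  -- assemble
  have hsz : ∑ i, opApp (a i) (K i) r (z i) =
      (∑ i ∈ Finset.univ.erase i0, opApp (a i) (K i) r (z i)) +
        opApp (a i0) (K i0) r (z i0) := by
    rw [Finset.sum_erase_add _ _ (Finset.mem_univ i0)]
  have hsw : ∑ i, opApp (a i) (K i) r (w i) =
      (∑ i ∈ Finset.univ.erase i0, opApp (a i) (K i) r (w i)) +
        opApp (a i0) (K i0) r (w i0) := by
    rw [Finset.sum_erase_add _ _ (Finset.mem_univ i0)]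
  have hTz := htail z hz (le_refl _)
  have hTw := htail w hw (by omega)
  rw [hsz, hsw]
  have h6 := abs_le.mp hTz
  have h7 := abs_le.mp hTw
  linarith

lemma cone_update (m Δ : ℕ) (hm : 0 < m) (p : Fin m → ℕ) (hp : InCone m Δ p) (v : ℕ)
    (hv : p ⟨0, hm⟩ ≤ v) : InCone m Δ (Function.update p ⟨0, hm⟩ v) := by
  intro i
  by_cases hi : i = ⟨0, hm⟩
  · subst hi
    have h1 := hp ⟨0, hm⟩
    rw [Function.update_self]
    by_cases h : (0:ℕ) + 1 < m
    · rw [dif_pos h] at h1 ⊢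
      rw [Function.update_of_ne (by simp [Fin.ext_iff])]
      omega
    · rw [dif_neg h] at h1 ⊢
      omega
  · have h1 := hp i
    rw [Function.update_of_ne hi]
    by_cases h : (i : ℕ) + 1 < m
    · rw [dif_pos h] at h1 ⊢
      rw [Function.update_of_ne (by simp [Fin.ext_iff])]
      exact h1
    · rw [dif_neg h] at h1 ⊢
      exact h1


/-- for sufficiently large `Δ`, if `p = P_Δ(x)` maximizes the sum
`Σ_i A_i(z_i)` over `R^m_Δ` subject to the sum being `< x`, and `q = Q_Δ(x)`
minimizes it subject to the sum being `≥ x`, then the first coordinates (indices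
into the enumeration) satisfy `q₁ ∈ {p₁ − 1, p₁, p₁ + 1}`. -/
theorem P_Q_first_coordinates_adjacent (r : ℕ → ℕ) (hmono : StrictMono r)
    (hsparse : IsSparse r) (m : ℕ) (hm : 0 < m)
    (a : Fin m → ℕ → ℤ) (K : Fin m → ℕ)
    (hnz : ∀ i : Fin m, ¬ ∀ n, opApp (a i) (K i) r n = 0) :
    ∀ᶠ Δ : ℕ in atTop, ∀ (x : ℤ) (p q : Fin m → ℕ),
      InCone m Δ p → (∑ i, opApp (a i) (K i) r (p i)) < x →
      (∀ z : Fin m → ℕ, InCone m Δ z → (∑ i, opApp (a i) (K i) r (z i)) < x →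
        (∑ i, opApp (a i) (K i) r (z i)) ≤ (∑ i, opApp (a i) (K i) r (p i))) →
      InCone m Δ q → x ≤ (∑ i, opApp (a i) (K i) r (q i)) →
      (∀ z : Fin m → ℕ, InCone m Δ z → x ≤ (∑ i, opApp (a i) (K i) r (z i)) →
        (∑ i, opApp (a i) (K i) r (q i)) ≤ (∑ i, opApp (a i) (K i) r (z i))) →
      (q ⟨0, hm⟩ + 1 = p ⟨0, hm⟩ ∨ q ⟨0, hm⟩ = p ⟨0, hm⟩ ∨ q ⟨0, hm⟩ = p ⟨0, hm⟩ + 1) := by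
  rcases (hsparse (a ⟨0, hm⟩) (K ⟨0, hm⟩)).1 with hz | hp | hn
  · exact absurd hz (hnz ⟨0, hm⟩)
  · -- first operator eventually positive
    obtain ⟨N, hN⟩ := dom_lemma r hmono hsparse m hm a K hp
    filter_upwards [eventually_ge_atTop N] with Δ hΔ
    intro x p q hpc hplt hpmax hqc hqge hqmin
    have dom := hN Δ hΔ
    have h1 : p ⟨0, hm⟩ ≤ q ⟨0, hm⟩ := by
      by_contra hcon
      push_neg at hcon
      have := dom p q hpc hqc hcon
      linarith
    have h2 : q ⟨0, hm⟩ ≤ p ⟨0, hm⟩ + 1 := by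
      by_contra hcon
      push_neg at hcon
      set z : Fin m → ℕ := Function.update p ⟨0, hm⟩ (q ⟨0, hm⟩ - 1) with hzdef
      have hzc : InCone m Δ z := cone_update m Δ hm p hpc _ (by omega)
      have hz0 : z ⟨0, hm⟩ = q ⟨0, hm⟩ - 1 := Function.update_self _ _ _
      have hpz : (∑ i, opApp (a i) (K i) r (p i)) < ∑ i, opApp (a i) (K i) r (z i) :=
        dom z p hzc hpc (by omega)
      have hzq : (∑ i, opApp (a i) (K i) r (z i)) < ∑ i, opApp (a i) (K i) r (q i) :=
        dom q z hqc hzc (by omega)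
      rcases lt_or_ge (∑ i, opApp (a i) (K i) r (z i)) x with h | h
      · have := hpmax z hzc h
        linarith
      · have := hqmin z hzc h
        linarith
    omega
  · -- first operator eventually negative
    set a' : Fin m → ℕ → ℤ := fun i n => -(a i n) with ha'
    have hneg : ∀ i n, opApp (a' i) (K i) r n = -opApp (a i) (K i) r n := by
      intro i n
      exact opApp_neg (a i) (K i) r n
    have hp' : ∀ᶠ n in atTop, 0 < opApp (a' ⟨0, hm⟩) (K ⟨0, hm⟩) r n := by
      filter_upwards [hn] with n h
      rw [hneg]
      omega
    obtain ⟨N, hN⟩ := dom_lemma r hmono hsparse m hm a' K hp'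
    filter_upwards [eventually_ge_atTop N] with Δ hΔ
    intro x p q hpc hplt hpmax hqc hqge hqmin
    have dom : ∀ z w : Fin m → ℕ, InCone m Δ z → InCone m Δ w →
        w ⟨0, hm⟩ < z ⟨0, hm⟩ →
        ∑ i, opApp (a i) (K i) r (z i) < ∑ i, opApp (a i) (K i) r (w i) := by
      intro z w hzc hwc hlt
      have := hN Δ hΔ z w hzc hwc hlt
      simp only [hneg, Finset.sum_neg_distrib] at this
      linarith
    have h1 : q ⟨0, hm⟩ ≤ p ⟨0, hm⟩ := by
      by_contra hcon
      push_neg at hcon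
      have := dom q p hqc hpc hcon
      linarith
    have h2 : p ⟨0, hm⟩ ≤ q ⟨0, hm⟩ + 1 := by
      by_contra hcon
      push_neg at hcon
      set z : Fin m → ℕ := Function.update q ⟨0, hm⟩ (p ⟨0, hm⟩ - 1) with hzdef
      have hzc : InCone m Δ z := cone_update m Δ hm q hqc _ (by omega)
      have hz0 : z ⟨0, hm⟩ = p ⟨0, hm⟩ - 1 := Function.update_self _ _ _
      have hzq : (∑ i, opApp (a i) (K i) r (z i)) < ∑ i, opApp (a i) (K i) r (q i) :=
        dom z q hzc hqc (by omega)
      have hpz : (∑ i, opApp (a i) (K i) r (p i)) < ∑ i, opApp (a i) (K i) r (z i) :=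
        dom p z hpc hzc (by omega)
      rcases lt_or_ge (∑ i, opApp (a i) (K i) r (z i)) x with h | h
      · have := hpmax z hzc h
        linarith
      · have := hqmin z hzc h
        linarith
    omega
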